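/- For all real numbers d_0, d_1 and every integer k ≥ 0: ∫_{−1}^{1} Q(x)^k dμ_e(x) = Σ_{i=0}^{⌊k/2⌋} C(k, 2i) · C(2(k−i), k−i) · d_0^{2i} · d_1^{k−2i} / 2^{3k−4i}, where C denotes the binomial coefficient. -/

import Mathlib

/-!
Substituting `x = cos θ` turns `dx / √(1 - x²)` into `dθ` on `[0, π]`, so the moment becomes
`(1/π) ∫₀^π Q(cos θ)^k dθ`. Expanding `Q(cos θ)^k = (d₀ cos θ + (d₁/2) cos² θ)^k` binomially leaves
the Wallis integrals `∫₀^π cos^n θ dθ`, which vanish for odd `n` and equal `π C(2q, q) / 4^q` for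
`n = 2q`; only the terms with an even power of `d₀` survive.
-/

open Real Finset MeasureTheory

theorem integral_div_sqrt_one_sub_sq_eq_integral_comp_cos (g : ℝ → ℝ) :
    ∫ x in (-1 : ℝ)..1, g x / √(1 - x ^ 2) = ∫ θ in 0..π, g (cos θ) := by
  calc ∫ x in (-1 : ℝ)..1, g x / √(1 - x ^ 2)
      = ∫ x in cos '' Set.Icc 0 π, g x / √(1 - x ^ 2) := by
        rw [intervalIntegral.integral_of_le (by norm_num), bijOn_cos.image_eq,
          integral_Icc_eq_integral_Ioc]
    _ = ∫ θ in Set.Icc 0 π, |-sin θ| • (g (cos θ) / √(1 - cos θ ^ 2)) :=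
        integral_image_eq_integral_abs_deriv_smul measurableSet_Icc
          (fun θ _ => (hasDerivAt_cos θ).hasDerivWithinAt) injOn_cos _
    _ = ∫ θ in Set.Ioo 0 π, g (cos θ) := by
        rw [integral_Icc_eq_integral_Ioo]
        refine setIntegral_congr_fun measurableSet_Ioo fun θ ⟨h0, hπ⟩ => ?_
        have hsin : 0 < sin θ := sin_pos_of_pos_of_lt_pi h0 hπ
        rw [← sin_eq_sqrt_one_sub_cos_sq h0.le hπ.le, abs_neg, abs_of_pos hsin, smul_eq_mul,
          mul_div_cancel₀ _ hsin.ne']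
    _ = ∫ θ in 0..π, g (cos θ) := by
        rw [intervalIntegral.integral_of_le pi_pos.le, integral_Ioc_eq_integral_Ioo]

theorem integral_cos_pow_add_two_zero_pi (n : ℕ) :
    ∫ θ in 0..π, cos θ ^ (n + 2) = (n + 1) / (n + 2) * ∫ θ in 0..π, cos θ ^ n := by
  simp [integral_cos_pow]

theorem integral_cos_pow_odd_zero_pi (q : ℕ) : ∫ θ in 0..π, cos θ ^ (2 * q + 1) = 0 := by
  induction q with
  | zero => simp
  | succ q ih => rw [mul_add_one, add_right_comm, integral_cos_pow_add_two_zero_pi, ih, mul_zero]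

theorem integral_cos_pow_even_zero_pi (q : ℕ) :
    ∫ θ in 0..π, cos θ ^ (2 * q) = π * (2 * q).choose q / 2 ^ (2 * q) := by
  induction q with
  | zero => simp
  | succ q ih =>
    have hcentral : ((q + 1 : ℕ) : ℝ) * (2 * q + 2).choose (q + 1)
        = 2 * (2 * q + 1) * (2 * q).choose q := by
      exact_mod_cast q.succ_mul_centralBinom_succ
    rw [mul_add_one, integral_cos_pow_add_two_zero_pi, ih, pow_add]
    push_cast at hcentral ⊢
    field_simp
    linear_combination -hcentral

theorem sum_range_succ_eq_sum_even_of_odd_eq_zero {M : Type*} [AddCommMonoid M] (n : ℕ)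
    (f : ℕ → M) (hf : ∀ j ≤ n, Odd j → f j = 0) :
    ∑ j ∈ range (n + 1), f j = ∑ i ∈ range (n / 2 + 1), f (2 * i) := by
  rw [← sum_image fun i _ j _ (h : 2 * i = 2 * j) => by omega]
  refine (sum_subset (fun j => by simp only [mem_image, mem_range]; omega) fun j hj hj' => ?_).symm
  simp only [mem_image, mem_range, not_exists, not_and] at hj hj'
  exact hf j (by omega) (Nat.not_even_iff_odd.mp fun ⟨i, hi⟩ => hj' i (by omega) (by omega))

theorem integral_quadratic_cos_pow (a b : ℝ) (k : ℕ) :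
    ∫ θ in 0..π, (a * cos θ ^ 2 + b * cos θ) ^ k
      = π * ∑ i ∈ range (k / 2 + 1),
          (k.choose (2 * i) : ℝ) * (2 * (k - i)).choose (k - i) * b ^ (2 * i) * a ^ (k - 2 * i)
            / 2 ^ (2 * (k - i)) := by
  have hexpand (θ : ℝ) : (a * cos θ ^ 2 + b * cos θ) ^ k
      = ∑ j ∈ range (k + 1), k.choose j * b ^ j * a ^ (k - j) * cos θ ^ (2 * k - j) := by
    rw [add_comm, add_pow]
    refine sum_congr rfl fun j hj => ?_
    have hpow : cos θ ^ (2 * k - j) = cos θ ^ j * (cos θ ^ 2) ^ (k - j) := by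
      rw [← pow_mul, ← pow_add]
      congr 1
      simp only [mem_range] at hj
      omega
    rw [hpow]
    ring
  simp_rw [hexpand]
  rw [intervalIntegral.integral_finsetSum fun j _ => by
    apply Continuous.intervalIntegrable; fun_prop]
  simp_rw [intervalIntegral.integral_const_mul]
  rw [sum_range_succ_eq_sum_even_of_odd_eq_zero, mul_sum]
  · refine sum_congr rfl fun i _ => ?_
    rw [show 2 * k - 2 * i = 2 * (k - i) by omega, integral_cos_pow_even_zero_pi]
    ring
  · rintro j hj ⟨t, rfl⟩
    rw [show 2 * k - (2 * t + 1) = 2 * (k - t - 1) + 1 by omega, integral_cos_pow_odd_zero_pi,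
      mul_zero]

theorem arcsine_moments_of_Q (d0 d1 : ℝ) (k : ℕ) :
    (∫ x in (-1 : ℝ)..1, (d1 / 2 * x ^ 2 + d0 * x) ^ k / (π * Real.sqrt (1 - x ^ 2)))
      = ∑ i ∈ Finset.range (k / 2 + 1),
          (k.choose (2 * i) : ℝ) * ((2 * (k - i)).choose (k - i) : ℝ) *
            d0 ^ (2 * i) * d1 ^ (k - 2 * i) / 2 ^ (3 * k - 4 * i) := by
  simp only [div_mul_eq_div_div]
  rw [integral_div_sqrt_one_sub_sq_eq_integral_comp_cos fun x => (d1 / 2 * x ^ 2 + d0 * x) ^ k / π,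
    intervalIntegral.integral_div, integral_quadratic_cos_pow, mul_div_cancel_left₀ _ pi_ne_zero]
  refine sum_congr rfl fun i hi => ?_
  have hpow : (2 : ℝ) ^ (3 * k - 4 * i) = 2 ^ (k - 2 * i) * 2 ^ (2 * (k - i)) := by
    rw [← pow_add]
    congr 1
    simp only [mem_range] at hi
    omega
  rw [hpow, div_pow]
  field_simp
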